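/- For every ε > 0 there exists a constant C_ε > 0, depending only on ε, n, δ, g, C₀, C₁, γ₀, γ₁, such that for every v = r v̂ with r = |v| ≥ 1: ∫_{{t∈ℝ : |t|≥1}} |t|·‖∇Ṽ^s_{|v|,t}‖_∞ dt ≤ C_ε |v|^{−2(γ₁−1)+ε}. -/

import Mathlib

open scoped InnerProductSpace
open MeasureTheory Real Filter

noncomputable section

set_option maxHeartbeats 1000000

/-- sup-norm of the gradient of `W` : `‖∇W‖_∞ = sup_x |∇W(x)|`. -/
noncomputable def gradSup {n : ℕ} (W : EuclideanSpace ℝ (Fin n) → ℝ) : ℝ :=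
  ⨆ x, ‖fderiv ℝ W x‖

/-- sup-norm of the Laplacian of `W` : `‖ΔW‖_∞ = sup_x |ΔW(x)|`. -/
noncomputable def lapSup {n : ℕ} (W : EuclideanSpace ℝ (Fin n) → ℝ) : ℝ :=
  ⨆ x, |∑ j, fderiv ℝ (fun y => fderiv ℝ W y (EuclideanSpace.single j 1)) x
      (EuclideanSpace.single j 1)|

/-- the cut-off translated potential
`Ṽ_{|v|,t}(x) = V(x + v t + e₁ t²/2) · g(x/(λ₁|v|⟨t⟩))`, with `v = r·v̂`. -/
noncomputable def cutV {n : ℕ} (V g : EuclideanSpace ℝ (Fin n) → ℝ)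
    (lam : ℝ) (vhat e1 : EuclideanSpace ℝ (Fin n)) (r t : ℝ) :
    EuclideanSpace ℝ (Fin n) → ℝ :=
  fun x => V (x + (r * t) • vhat + (t ^ 2 / 2) • e1) *
    g ((lam * r * Real.sqrt (1 + t ^ 2))⁻¹ • x)

private lemma aux_split_stmt5 {A B α β : ℝ} (hA : 1 ≤ A) (hB : 1 ≤ B)
    (hα : 0 ≤ α) (hβ : 0 ≤ β) :
    (A + B) ^ (-(α + β)) ≤ A ^ (-α) * B ^ (-β) := by
  have hA0 : 0 < A := lt_of_lt_of_le one_pos hA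
  have hB0 : 0 < B := lt_of_lt_of_le one_pos hB
  have hX0 : 0 < A + B := by linarith
  rw [Real.rpow_neg hX0.le, Real.rpow_neg hA0.le, Real.rpow_neg hB0.le, ← mul_inv]
  apply inv_anti₀ (by positivity)
  calc A ^ α * B ^ β ≤ (A + B) ^ α * (A + B) ^ β := by
        apply mul_le_mul (Real.rpow_le_rpow hA0.le (by linarith) hα)
          (Real.rpow_le_rpow hB0.le (by linarith) hβ) (by positivity) (by positivity)
    _ = (A + B) ^ (α + β) := (Real.rpow_add hX0 _ _).symm

private lemma split_bound_stmt5 {r t α β : ℝ} (hr : 1 ≤ r) (ht : 1 ≤ |t|)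
    (hα : 0 ≤ α) (hβ : 0 ≤ β) :
    |t| * (r * |t| + t ^ 2) ^ (-(α + β)) ≤ r ^ (-α) * |t| ^ (1 - α - 2 * β) := by
  have ht0 : 0 < |t| := lt_of_lt_of_le one_pos ht
  have hr0 : 0 < r := lt_of_lt_of_le one_pos hr
  have hA : 1 ≤ r * |t| := by nlinarith
  have hB : 1 ≤ t ^ 2 := by nlinarith [sq_abs t]
  have h1 : (r * |t| + t ^ 2) ^ (-(α + β)) ≤ (r * |t|) ^ (-α) * (t ^ 2) ^ (-β) :=
    aux_split_stmt5 hA hB hα hβ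
  have h2 : (r * |t|) ^ (-α) = r ^ (-α) * |t| ^ (-α) := Real.mul_rpow hr0.le (abs_nonneg t)
  have h3 : (t ^ 2 : ℝ) ^ (-β) = |t| ^ (-(2 * β)) := by
    rw [← sq_abs t, ← Real.rpow_natCast |t| 2, ← Real.rpow_mul (abs_nonneg t)]
    norm_num
  calc |t| * (r * |t| + t ^ 2) ^ (-(α + β))
      ≤ |t| * ((r * |t|) ^ (-α) * (t ^ 2) ^ (-β)) :=
        mul_le_mul_of_nonneg_left h1 (abs_nonneg t)
    _ = r ^ (-α) * (|t| ^ (1:ℝ) * (|t| ^ (-α) * |t| ^ (-(2 * β)))) := by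
        rw [h2, h3, Real.rpow_one]; ring
    _ = r ^ (-α) * |t| ^ (1 - α - 2 * β) := by
        rw [← Real.rpow_add ht0, ← Real.rpow_add ht0]
        ring_nf

private lemma geo_stmt5 {n : ℕ} {vhat e1 : EuclideanSpace ℝ (Fin n)}
    (hvhat : ‖vhat‖ = 1) (he1n : ‖e1‖ = 1)
    {δ lam r t : ℝ} (hδ : δ = |⟪vhat, e1⟫_ℝ|) (hδ1 : δ < 1)
    (hlam : lam = (1 - δ) / (16 * Real.sqrt 2))
    (hr : 1 ≤ r) (ht : 1 ≤ |t|)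
    (x : EuclideanSpace ℝ (Fin n))
    (hx : ‖x‖ ≤ 4 * (lam * r * Real.sqrt (1 + t ^ 2))) :
    Real.sqrt (1 - δ) / 8 * (r * |t| + t ^ 2) ≤ ‖x + ((r * t) • vhat + (t ^ 2 / 2) • e1)‖ := by
  have hδ0 : 0 ≤ δ := hδ ▸ abs_nonneg _
  have hσ : (0:ℝ) < 1 - δ := by linarith
  have hr0 : 0 < r := lt_of_lt_of_le one_pos hr
  have ht0 : 0 < |t| := lt_of_lt_of_le one_pos ht
  have ht2 : 1 ≤ t ^ 2 := by nlinarith [sq_abs t]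
  set a := (r * t) • vhat + (t ^ 2 / 2) • e1 with ha
  have e1' : ‖(r * t) • vhat‖ = r * |t| := by
    rw [norm_smul, hvhat, mul_one, Real.norm_eq_abs, abs_mul, abs_of_pos hr0]
  have e2' : ‖(t ^ 2 / 2) • e1‖ = t ^ 2 / 2 := by
    rw [norm_smul, he1n, mul_one, Real.norm_eq_abs, abs_of_nonneg (by positivity)]
  have hinner : |⟪(r * t) • vhat, (t ^ 2 / 2) • e1⟫_ℝ| ≤ δ * ((r * |t|) * (t ^ 2 / 2)) := by
    have h0 : ⟪(r * t) • vhat, (t ^ 2 / 2) • e1⟫_ℝ = (r * t) * ((t ^ 2 / 2) * ⟪vhat, e1⟫_ℝ) := by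
      rw [real_inner_smul_left, real_inner_smul_right]
    rw [h0, hδ]
    have h1 : |r * t * (t ^ 2 / 2 * ⟪vhat, e1⟫_ℝ)| = |⟪vhat, e1⟫_ℝ| * (r * |t| * (t ^ 2 / 2)) := by
      rw [abs_mul, abs_mul, abs_mul, abs_of_pos hr0,
        abs_of_nonneg (show (0:ℝ) ≤ t ^ 2 / 2 by positivity)]
      ring
    rw [h1]
  have hsq := norm_add_sq_real ((r * t) • vhat) ((t ^ 2 / 2) • e1)
  rw [e1', e2'] at hsq
  have hI : -(δ * ((r * |t|) * (t ^ 2 / 2))) ≤ ⟪(r * t) • vhat, (t ^ 2 / 2) • e1⟫_ℝ :=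
    le_trans (neg_le_neg hinner) (neg_abs_le _)
  have hA2 : (1 - δ) * ((r * |t|) ^ 2 + (t ^ 2 / 2) ^ 2) ≤ ‖a‖ ^ 2 := by
    rw [ha, hsq]
    nlinarith [sq_nonneg (r * |t| - t ^ 2 / 2), hδ0, hI]
  have hA : Real.sqrt (1 - δ) * (r * |t| + t ^ 2 / 2) / 2 ≤ ‖a‖ := by
    have h4 : (Real.sqrt (1 - δ) * (r * |t| + t ^ 2 / 2) / 2) ^ 2 ≤ ‖a‖ ^ 2 := by
      rw [div_pow, mul_pow, Real.sq_sqrt hσ.le]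
      nlinarith [hA2, sq_nonneg (r * |t| - t ^ 2 / 2), hσ.le]
    have h5 := Real.sqrt_le_sqrt h4
    rwa [Real.sqrt_sq (by positivity), Real.sqrt_sq (norm_nonneg _)] at h5
  have hs2 : Real.sqrt (1 + t ^ 2) ≤ Real.sqrt 2 * |t| := by
    rw [show Real.sqrt 2 * |t| = Real.sqrt (2 * t ^ 2) by
      rw [Real.sqrt_mul (by norm_num), Real.sqrt_sq_eq_abs]]
    exact Real.sqrt_le_sqrt (by nlinarith)
  have hss : Real.sqrt 2 * Real.sqrt 2 = 2 := Real.mul_self_sqrt (by norm_num)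
  have hsd : 1 - δ ≤ Real.sqrt (1 - δ) := by
    have h6 := Real.sqrt_le_sqrt (show (1 - δ) ^ 2 ≤ 1 - δ by nlinarith)
    rwa [Real.sqrt_sq hσ.le] at h6
  have hxb : ‖x‖ ≤ Real.sqrt (1 - δ) * (r * |t|) / 4 := by
    have s2 : (0:ℝ) < Real.sqrt 2 := by positivity
    have h7 : 4 * (lam * r * Real.sqrt (1 + t ^ 2)) ≤ (1 - δ) * (r * |t|) / 4 := by
      rw [hlam]
      have h8 : (1 - δ) / (16 * Real.sqrt 2) * r * Real.sqrt (1 + t ^ 2)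
          ≤ (1 - δ) / (16 * Real.sqrt 2) * r * (Real.sqrt 2 * |t|) := by
        gcongr
      calc 4 * ((1 - δ) / (16 * Real.sqrt 2) * r * Real.sqrt (1 + t ^ 2))
          ≤ 4 * ((1 - δ) / (16 * Real.sqrt 2) * r * (Real.sqrt 2 * |t|)) := by linarith
        _ = (1 - δ) * (r * |t|) / 4 := by
            field_simp
            nlinarith [hss, s2]
    have h9 : (1 - δ) * (r * |t|) / 4 ≤ Real.sqrt (1 - δ) * (r * |t|) / 4 := by
      gcongr
    linarith
  have htri : ‖a‖ ≤ ‖x + a‖ + ‖x‖ := by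
    have h10 := norm_add_le (x + a) (-x)
    simpa [add_comm] using h10
  have hsn : 0 ≤ Real.sqrt (1 - δ) := Real.sqrt_nonneg _
  have hPQ : 0 ≤ Real.sqrt (1 - δ) * (r * |t| + t ^ 2) := by positivity
  nlinarith [hA, hxb, htri, hPQ]

theorem stmt_5 (n : ℕ) (hn : 2 ≤ n)
    (e1 : EuclideanSpace ℝ (Fin n))
    (he1 : e1 = EuclideanSpace.single ⟨0, by omega⟩ (1 : ℝ))
    (vhat : EuclideanSpace ℝ (Fin n)) (hvhat : ‖vhat‖ = 1)
    (δ : ℝ) (hδ : δ = |⟪vhat, e1⟫_ℝ|) (hδ1 : δ < 1)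
    (lam : ℝ) (hlam : lam = (1 - δ) / (16 * Real.sqrt 2))
    (g : EuclideanSpace ℝ (Fin n) → ℝ) (hg : ContDiff ℝ (⊤ : ℕ∞) g)
    (hg0 : ∀ y, 0 ≤ g y) (hg1 : ∀ y, g y ≤ 1)
    (hg3 : ∀ y, ‖y‖ ≤ 3 → g y = 1) (hg4 : ∀ y, 4 ≤ ‖y‖ → g y = 0)
    (Vs : EuclideanSpace ℝ (Fin n) → ℝ) (hVs : ContDiff ℝ 1 Vs)
    (C0 C1 γ0 γ1 : ℝ) (hC0 : 0 < C0) (hC1 : 0 < C1)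
    (hγ0 : 1 / 2 < γ0) (hγ0' : γ0 ≤ 1) (hγ1 : 1 < γ1) (hγ1' : γ1 ≤ 1 + γ0)
    (hVb : ∀ x, |Vs x| ≤ C0 * Real.sqrt (1 + ‖x‖ ^ 2) ^ (-γ0))
    (hVd : ∀ x, ∀ j : Fin n,
      |fderiv ℝ Vs x (EuclideanSpace.single j 1)| ≤
        C1 * Real.sqrt (1 + ‖x‖ ^ 2) ^ (-γ1)) :
    ∀ ε > (0 : ℝ), ∃ Cε > (0 : ℝ), ∀ r : ℝ, 1 ≤ r →
      ∫ t in {t : ℝ | 1 ≤ |t|}, |t| * gradSup (cutV Vs g lam vhat e1 r t) ≤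
        Cε * r ^ (-(2 * (γ1 - 1)) + ε) := by
  have hδ0 : 0 ≤ δ := hδ ▸ abs_nonneg _
  have hσ : (0:ℝ) < 1 - δ := by linarith
  have he1n : ‖e1‖ = 1 := by rw [he1, EuclideanSpace.norm_single]; norm_num
  have hlam0 : 0 < lam := by rw [hlam]; positivity
  -- bound on the gradient of g
  obtain ⟨M, hM0, hM⟩ : ∃ M, 0 < M ∧ ∀ y, ‖fderiv ℝ g y‖ ≤ M := by
    have hcont : Continuous fun y => ‖fderiv ℝ g y‖ :=
      (hg.continuous_fderiv (by simp)).norm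
    obtain ⟨y0, -, hy0⟩ := (isCompact_closedBall (0 : EuclideanSpace ℝ (Fin n)) 4).exists_isMaxOn
      ⟨0, by simp⟩ hcont.continuousOn
    refine ⟨‖fderiv ℝ g y0‖ + 1, by positivity, fun y => ?_⟩
    by_cases hy : ‖y‖ ≤ 4
    · have := hy0 (by simpa [Metric.mem_closedBall, dist_zero_right] using hy)
      simp only [Set.mem_setOf_eq] at this
      linarith
    · have hzero : fderiv ℝ g y = 0 := by
        have hopen : {z : EuclideanSpace ℝ (Fin n) | 4 < ‖z‖} ∈ nhds y :=
          (isOpen_lt continuous_const continuous_norm).mem_nhds (by simpa using hy)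
        have heq : g =ᶠ[nhds y] fun _ => (0:ℝ) :=
          Filter.eventuallyEq_of_mem hopen fun z hz => hg4 z (le_of_lt hz)
        rw [heq.fderiv_eq, fderiv_fun_const]
        rfl
      rw [hzero]
      simp
      positivity
  -- operator-norm bound for the derivative of Vs
  have hVnorm : ∀ z : EuclideanSpace ℝ (Fin n),
      ‖fderiv ℝ Vs z‖ ≤ (n : ℝ) * (C1 * Real.sqrt (1 + ‖z‖ ^ 2) ^ (-γ1)) := by
    intro z
    have hX : 0 < Real.sqrt (1 + ‖z‖ ^ 2) ^ (-γ1) := by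
      apply Real.rpow_pos_of_pos
      exact Real.sqrt_pos.2 (by positivity)
    apply ContinuousLinearMap.opNorm_le_bound _ (by positivity)
    intro u
    have hrep : (∑ j, u j • EuclideanSpace.single j (1:ℝ)) = u := by
      have h := (EuclideanSpace.basisFun (Fin n) ℝ).sum_repr u
      simpa [EuclideanSpace.basisFun_apply, EuclideanSpace.basisFun_repr] using h
    have hcoord : ∀ j : Fin n, |u j| ≤ ‖u‖ := by
      intro j
      have h : ⟪EuclideanSpace.single j (1:ℝ), u⟫_ℝ = u j := by
        simp [EuclideanSpace.inner_single_left]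
      have h2 := abs_real_inner_le_norm (EuclideanSpace.single j (1:ℝ)) u
      rw [h, EuclideanSpace.norm_single] at h2
      simpa using h2
    calc ‖fderiv ℝ Vs z u‖
        = ‖fderiv ℝ Vs z (∑ j, u j • EuclideanSpace.single j (1:ℝ))‖ := by rw [hrep]
      _ = ‖∑ j, u j * fderiv ℝ Vs z (EuclideanSpace.single j (1:ℝ))‖ := by
          rw [map_sum]; simp [smul_eq_mul]
      _ ≤ ∑ j : Fin n, |u j| * |fderiv ℝ Vs z (EuclideanSpace.single j (1:ℝ))| := by
          simpa using norm_sum_le Finset.univ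
            (fun j => u j * fderiv ℝ Vs z (EuclideanSpace.single j (1:ℝ)))
      _ ≤ ∑ j : Fin n, ‖u‖ * (C1 * Real.sqrt (1 + ‖z‖ ^ 2) ^ (-γ1)) := by
          apply Finset.sum_le_sum
          intro j _
          exact mul_le_mul (hcoord j) (hVd z j) (abs_nonneg _) (norm_nonneg _)
      _ = (n : ℝ) * (C1 * Real.sqrt (1 + ‖z‖ ^ 2) ^ (-γ1)) * ‖u‖ := by
          simp [Finset.sum_const, Finset.card_univ]; ring
  have hgrad_nonneg : ∀ W : EuclideanSpace ℝ (Fin n) → ℝ, 0 ≤ gradSup W := fun W => by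
    show 0 ≤ ⨆ x, ‖fderiv ℝ W x‖
    exact Real.iSup_nonneg fun x => norm_nonneg _
  intro ε hε
  set c : ℝ := Real.sqrt (1 - δ) / 8 with hcdef
  have hc : 0 < c := by rw [hcdef]; positivity
  set ε₀ : ℝ := min ε (min (γ1 - 1) (γ0 - 1/2)) with hε₀def
  have hε₀ : 0 < ε₀ := lt_min hε (lt_min (by linarith) (by linarith))
  have hε₀ε : ε₀ ≤ ε := min_le_left _ _
  have hε₀1 : ε₀ ≤ γ1 - 1 := le_trans (min_le_right _ _) (min_le_left _ _)
  have hε₀0 : ε₀ ≤ γ0 - 1/2 := le_trans (min_le_right _ _) (min_le_right _ _)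
  set p : ℝ := -(2 * (γ1 - 1)) + ε with hpdef
  set D : ℝ := (n : ℝ) * C1 * c ^ (-γ1) + C0 * M * c ^ (-γ0) * lam⁻¹ with hDdef
  have hD0 : 0 ≤ D := by
    rw [hDdef]
    have h1 : (0:ℝ) ≤ (n:ℝ) * C1 * c ^ (-γ1) :=
      mul_nonneg (mul_nonneg (Nat.cast_nonneg n) hC1.le) (Real.rpow_nonneg hc.le _)
    have h2 : (0:ℝ) ≤ C0 * M * c ^ (-γ0) * lam⁻¹ :=
      mul_nonneg (mul_nonneg (mul_nonneg hC0.le hM0.le) (Real.rpow_nonneg hc.le _))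
        (inv_nonneg.2 hlam0.le)
    linarith
  have hs : MeasurableSet {t : ℝ | 1 ≤ |t|} :=
    measurableSet_le measurable_const continuous_abs.measurable
  -- integrability of the dominating function
  have hIci : IntegrableOn (fun t : ℝ => |t| ^ (-1 - ε₀)) (Set.Ici (1:ℝ)) := by
    have h1 : IntegrableOn (fun t : ℝ => t ^ (-1 - ε₀)) (Set.Ioi (1:ℝ)) :=
      integrableOn_Ioi_rpow_of_lt (by linarith) one_pos
    have h2 : IntegrableOn (fun t : ℝ => t ^ (-1 - ε₀)) (Set.Ici (1:ℝ)) := by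
      rwa [integrableOn_Ici_iff_integrableOn_Ioi]
    apply Integrable.congr h2
    apply (ae_restrict_iff' measurableSet_Ici).2
    apply Filter.Eventually.of_forall
    intro x hx
    show x ^ (-1 - ε₀) = |x| ^ (-1 - ε₀)
    rw [abs_of_pos (lt_of_lt_of_le one_pos hx)]
  have hint : IntegrableOn (fun t : ℝ => |t| ^ (-1 - ε₀)) {t : ℝ | 1 ≤ |t|} := by
    have hset : {t : ℝ | 1 ≤ |t|} = Set.Iic (-1 : ℝ) ∪ Set.Ici (1:ℝ) := by
      ext t
      simp only [Set.mem_setOf_eq, Set.mem_union, Set.mem_Iic, Set.mem_Ici, le_abs]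
      constructor
      · rintro (h | h)
        · right; exact h
        · left; linarith
      · rintro (h | h)
        · right; linarith
        · left; exact h
    have hIic : IntegrableOn (fun t : ℝ => |t| ^ (-1 - ε₀)) (Set.Iic (-1:ℝ)) := by
      have hpre : (Neg.neg : ℝ → ℝ) ⁻¹' (Set.Iic (-1:ℝ)) = Set.Ici (1:ℝ) := by
        ext t
        simp only [Set.mem_preimage, Set.mem_Iic, Set.mem_Ici]
        constructor <;> intro h <;> linarith
      have hcomp : ((fun t : ℝ => |t| ^ (-1 - ε₀)) ∘ (Neg.neg : ℝ → ℝ))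
          = fun t : ℝ => |t| ^ (-1 - ε₀) := by
        funext t; simp [Function.comp, abs_neg]
      have h3 : IntegrableOn ((fun t : ℝ => |t| ^ (-1 - ε₀)) ∘ (Neg.neg : ℝ → ℝ))
          ((Neg.neg : ℝ → ℝ) ⁻¹' (Set.Iic (-1:ℝ))) := by
        rw [hcomp, hpre]; exact hIci
      exact (MeasurePreserving.integrableOn_comp_preimage
        (Measure.measurePreserving_neg (volume : Measure ℝ))
        (Homeomorph.neg ℝ).measurableEmbedding).1 h3
    rw [hset]
    exact hIic.union hIci
  set I₀ : ℝ := ∫ t in {t : ℝ | 1 ≤ |t|}, |t| ^ (-1 - ε₀) with hI₀def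
  have hI₀ : 0 ≤ I₀ := by
    rw [hI₀def]
    exact integral_nonneg fun t => Real.rpow_nonneg (abs_nonneg t) _
  refine ⟨D * I₀ + 1, by nlinarith [mul_nonneg hD0 hI₀], fun r hr => ?_⟩
  have hr0 : 0 < r := lt_of_lt_of_le one_pos hr
  have hrp : 0 < r ^ p := Real.rpow_pos_of_pos hr0 p
  -- pointwise bound
  have key : ∀ t ∈ {t : ℝ | 1 ≤ |t|},
      |t| * gradSup (cutV Vs g lam vhat e1 r t) ≤ D * r ^ p * |t| ^ (-1 - ε₀) := by
    intro t ht
    have hts : 1 ≤ |t| := ht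
    have ht0 : 0 < |t| := lt_of_lt_of_le one_pos hts
    have ht2 : 1 ≤ t ^ 2 := by nlinarith [sq_abs t]
    have hX0 : (0:ℝ) < r * |t| + t ^ 2 := by nlinarith
    set k : ℝ := lam * r * Real.sqrt (1 + t ^ 2) with hkdef
    have hsq1 : |t| ≤ Real.sqrt (1 + t ^ 2) := by
      rw [show |t| = Real.sqrt (t ^ 2) from (Real.sqrt_sq_eq_abs t).symm]
      exact Real.sqrt_le_sqrt (by linarith)
    have hk0 : 0 < k := by
      rw [hkdef]
      have : (0:ℝ) < Real.sqrt (1 + t ^ 2) := Real.sqrt_pos.2 (by positivity)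
      positivity
    have hcX : 0 < c * (r * |t| + t ^ 2) := mul_pos hc hX0
    -- gradient sup bound
    have grad_le : gradSup (cutV Vs g lam vhat e1 r t) ≤
        (n : ℝ) * C1 * (c * (r * |t| + t ^ 2)) ^ (-γ1)
          + C0 * M * (c * (r * |t| + t ^ 2)) ^ (-γ0) * k⁻¹ := by
      have hRHS1 : (0:ℝ) ≤ (n : ℝ) * C1 * (c * (r * |t| + t ^ 2)) ^ (-γ1) :=
        mul_nonneg (mul_nonneg (Nat.cast_nonneg n) hC1.le) (Real.rpow_nonneg hcX.le _)
      have hRHS2 : (0:ℝ) ≤ C0 * M * (c * (r * |t| + t ^ 2)) ^ (-γ0) * k⁻¹ :=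
        mul_nonneg (mul_nonneg (mul_nonneg hC0.le hM0.le) (Real.rpow_nonneg hcX.le _))
          (inv_nonneg.2 hk0.le)
      show (⨆ x, ‖fderiv ℝ (cutV Vs g lam vhat e1 r t) x‖) ≤ _
      apply ciSup_le
      intro x
      set a := (r * t) • vhat + (t ^ 2 / 2) • e1 with ha
      have hfun : cutV Vs g lam vhat e1 r t = fun y => Vs (y + a) * g (k⁻¹ • y) := by
        funext y
        simp only [cutV, ha, hkdef, add_assoc]
      have h1 : HasFDerivAt (fun y => Vs (y + a)) (fderiv ℝ Vs (x + a)) x := by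
        have h0 : HasFDerivAt (fun y : EuclideanSpace ℝ (Fin n) => y + a)
            (ContinuousLinearMap.id ℝ _) x := (hasFDerivAt_id x).add_const a
        have := ((hVs.differentiable one_ne_zero (x + a)).hasFDerivAt).comp x h0
        exact this
      have h2 : HasFDerivAt (fun y => g (k⁻¹ • y))
          ((fderiv ℝ g (k⁻¹ • x)).comp (k⁻¹ • ContinuousLinearMap.id ℝ _)) x := by
        have h0 : HasFDerivAt (fun y : EuclideanSpace ℝ (Fin n) => k⁻¹ • y)
            (k⁻¹ • ContinuousLinearMap.id ℝ _) x := (hasFDerivAt_id x).const_smul k⁻¹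
        exact ((hg.differentiable (by simp) (k⁻¹ • x)).hasFDerivAt).comp x h0
      have hmul := h1.mul h2
      rw [hfun, show (fun y => Vs (y + a) * g (k⁻¹ • y)) =
          ((fun y => Vs (y + a)) * fun y => g (k⁻¹ • y)) from rfl, hmul.fderiv]
      have hgnorm : ‖(fderiv ℝ g (k⁻¹ • x)).comp
          (k⁻¹ • ContinuousLinearMap.id ℝ (EuclideanSpace ℝ (Fin n)))‖ ≤ M * k⁻¹ := by
        calc ‖(fderiv ℝ g (k⁻¹ • x)).comp
              (k⁻¹ • ContinuousLinearMap.id ℝ (EuclideanSpace ℝ (Fin n)))‖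
            ≤ ‖fderiv ℝ g (k⁻¹ • x)‖
              * ‖k⁻¹ • ContinuousLinearMap.id ℝ (EuclideanSpace ℝ (Fin n))‖ :=
              ContinuousLinearMap.opNorm_comp_le _ _
          _ ≤ M * k⁻¹ := by
              apply mul_le_mul (hM _) ?_ (norm_nonneg _)
                (by linarith [norm_nonneg (fderiv ℝ g (k⁻¹ • x)), hM (k⁻¹ • x)])
              calc ‖k⁻¹ • ContinuousLinearMap.id ℝ (EuclideanSpace ℝ (Fin n))‖
                  ≤ ‖k⁻¹‖ * ‖ContinuousLinearMap.id ℝ (EuclideanSpace ℝ (Fin n))‖ :=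
                    ContinuousLinearMap.opNorm_smul_le _ _
                _ ≤ ‖k⁻¹‖ * 1 := by gcongr; exact ContinuousLinearMap.norm_id_le
                _ = k⁻¹ := by rw [mul_one, Real.norm_eq_abs, abs_of_pos (inv_pos.2 hk0)]
      by_cases hsupp : ‖x‖ ≤ 4 * k
      · -- support case
        have hgeo := geo_stmt5 hvhat he1n hδ hδ1 hlam hr hts x (by rwa [← hkdef])
        rw [← hcdef, ← ha] at hgeo
        have hz : c * (r * |t| + t ^ 2) ≤ Real.sqrt (1 + ‖x + a‖ ^ 2) := by
          apply le_trans hgeo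
          have h6 := Real.sqrt_le_sqrt (show ‖x + a‖ ^ 2 ≤ 1 + ‖x + a‖ ^ 2 by linarith)
          rwa [Real.sqrt_sq (norm_nonneg _)] at h6
        have hV1 : |Vs (x + a)| ≤ C0 * (c * (r * |t| + t ^ 2)) ^ (-γ0) := by
          calc |Vs (x + a)| ≤ C0 * Real.sqrt (1 + ‖x + a‖ ^ 2) ^ (-γ0) := hVb _
            _ ≤ C0 * (c * (r * |t| + t ^ 2)) ^ (-γ0) :=
                mul_le_mul_of_nonneg_left
                  (Real.rpow_le_rpow_of_nonpos hcX hz (by linarith)) hC0.le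
        have hF : ‖fderiv ℝ Vs (x + a)‖ ≤ (n : ℝ) * C1 * (c * (r * |t| + t ^ 2)) ^ (-γ1) := by
          calc ‖fderiv ℝ Vs (x + a)‖
              ≤ (n : ℝ) * (C1 * Real.sqrt (1 + ‖x + a‖ ^ 2) ^ (-γ1)) := hVnorm _
            _ ≤ (n : ℝ) * (C1 * (c * (r * |t| + t ^ 2)) ^ (-γ1)) := by
                apply mul_le_mul_of_nonneg_left _ (Nat.cast_nonneg n)
                exact mul_le_mul_of_nonneg_left
                  (Real.rpow_le_rpow_of_nonpos hcX hz (by linarith)) hC1.le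
            _ = (n : ℝ) * C1 * (c * (r * |t| + t ^ 2)) ^ (-γ1) := by ring
        have hgle : |g (k⁻¹ • x)| ≤ 1 := abs_le.2 ⟨by linarith [hg0 (k⁻¹ • x)], hg1 _⟩
        calc ‖Vs (x + a) • ((fderiv ℝ g (k⁻¹ • x)).comp
                (k⁻¹ • ContinuousLinearMap.id ℝ (EuclideanSpace ℝ (Fin n))))
              + g (k⁻¹ • x) • fderiv ℝ Vs (x + a)‖
            ≤ ‖Vs (x + a) • ((fderiv ℝ g (k⁻¹ • x)).comp
                (k⁻¹ • ContinuousLinearMap.id ℝ (EuclideanSpace ℝ (Fin n))))‖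
              + ‖g (k⁻¹ • x) • fderiv ℝ Vs (x + a)‖ := norm_add_le _ _
          _ ≤ |Vs (x + a)| * ‖(fderiv ℝ g (k⁻¹ • x)).comp
                (k⁻¹ • ContinuousLinearMap.id ℝ (EuclideanSpace ℝ (Fin n)))‖
              + |g (k⁻¹ • x)| * ‖fderiv ℝ Vs (x + a)‖ := by
              apply add_le_add
              · simpa [Real.norm_eq_abs] using
                  ContinuousLinearMap.opNorm_smul_le (Vs (x + a))
                    ((fderiv ℝ g (k⁻¹ • x)).comp
                      (k⁻¹ • ContinuousLinearMap.id ℝ (EuclideanSpace ℝ (Fin n))))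
              · simpa [Real.norm_eq_abs] using
                  ContinuousLinearMap.opNorm_smul_le (g (k⁻¹ • x)) (fderiv ℝ Vs (x + a))
          _ ≤ (C0 * (c * (r * |t| + t ^ 2)) ^ (-γ0)) * (M * k⁻¹)
              + 1 * ((n : ℝ) * C1 * (c * (r * |t| + t ^ 2)) ^ (-γ1)) := by
              apply add_le_add
              · exact mul_le_mul hV1 hgnorm (norm_nonneg _)
                  (mul_nonneg hC0.le (Real.rpow_nonneg hcX.le _))
              · exact mul_le_mul hgle hF (norm_nonneg _) one_pos.le
          _ = (n : ℝ) * C1 * (c * (r * |t| + t ^ 2)) ^ (-γ1)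
              + C0 * M * (c * (r * |t| + t ^ 2)) ^ (-γ0) * k⁻¹ := by ring
      · -- outside the support
        have h41 : 4 * k < ‖x‖ := not_le.1 hsupp
        have hgz : g (k⁻¹ • x) = 0 := by
          apply hg4
          rw [norm_smul, Real.norm_eq_abs, abs_of_pos (inv_pos.2 hk0)]
          have h2' : k⁻¹ * (4 * k) ≤ k⁻¹ * ‖x‖ :=
            mul_le_mul_of_nonneg_left h41.le (inv_nonneg.2 hk0.le)
          have h3' : k⁻¹ * (4 * k) = 4 := by field_simp
          linarith
        have h4lt : 4 < ‖k⁻¹ • x‖ := by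
          rw [norm_smul, Real.norm_eq_abs, abs_of_pos (inv_pos.2 hk0)]
          have h2' : k⁻¹ * (4 * k) < k⁻¹ * ‖x‖ :=
            mul_lt_mul_of_pos_left h41 (inv_pos.2 hk0)
          have h3' : k⁻¹ * (4 * k) = 4 := by field_simp
          linarith
        have hfz : fderiv ℝ g (k⁻¹ • x) = 0 := by
          have hopen : {z : EuclideanSpace ℝ (Fin n) | 4 < ‖z‖} ∈ nhds (k⁻¹ • x) :=
            (isOpen_lt continuous_const continuous_norm).mem_nhds h4lt
          have heq : g =ᶠ[nhds (k⁻¹ • x)] fun _ => (0:ℝ) :=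
            Filter.eventuallyEq_of_mem hopen fun z hz => hg4 z hz.le
          rw [heq.fderiv_eq, fderiv_fun_const]
          rfl
        rw [hgz, hfz]
        simp only [ContinuousLinearMap.zero_comp, smul_zero, zero_smul, add_zero, norm_zero]
        linarith
    -- combine with the rpow algebra
    have hsplit1 : |t| * (r * |t| + t ^ 2) ^ (-γ1)
        ≤ r ^ (-(2*γ1 - 2 - ε₀)) * |t| ^ (-1 - ε₀) := by
      have h := split_bound_stmt5 (α := 2*γ1 - 2 - ε₀) (β := 2 + ε₀ - γ1) hr hts
        (by linarith) (by linarith)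
      have hab : -((2*γ1 - 2 - ε₀) + (2 + ε₀ - γ1)) = -γ1 := by ring
      have hexp : (1:ℝ) - (2*γ1 - 2 - ε₀) - 2 * (2 + ε₀ - γ1) = -1 - ε₀ := by ring
      rwa [hab, hexp] at h
    have hsplit2 : |t| * (r * |t| + t ^ 2) ^ (-γ0)
        ≤ r ^ (-(2*γ0 - 1 - ε₀)) * |t| ^ (-ε₀) := by
      have h := split_bound_stmt5 (α := 2*γ0 - 1 - ε₀) (β := 1 + ε₀ - γ0) hr hts
        (by linarith) (by linarith)
      have hab : -((2*γ0 - 1 - ε₀) + (1 + ε₀ - γ0)) = -γ0 := by ring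
      have hexp : (1:ℝ) - (2*γ0 - 1 - ε₀) - 2 * (1 + ε₀ - γ0) = -ε₀ := by ring
      rwa [hab, hexp] at h
    have hT1 : |t| * (r * |t| + t ^ 2) ^ (-γ1) ≤ r ^ p * |t| ^ (-1 - ε₀) := by
      apply le_trans hsplit1
      apply mul_le_mul_of_nonneg_right _ (Real.rpow_nonneg (abs_nonneg t) _)
      apply Real.rpow_le_rpow_of_exponent_le hr
      rw [hpdef]; linarith
    have hT2 : (|t| * (r * |t| + t ^ 2) ^ (-γ0)) * k⁻¹
        ≤ lam⁻¹ * (r ^ p * |t| ^ (-1 - ε₀)) := by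
      have hk1 : lam * r * |t| ≤ k := by
        rw [hkdef]
        exact mul_le_mul_of_nonneg_left hsq1 (by positivity)
      have hkinv : k⁻¹ ≤ (lam * r * |t|)⁻¹ := inv_anti₀ (by positivity) hk1
      calc (|t| * (r * |t| + t ^ 2) ^ (-γ0)) * k⁻¹
          ≤ (r ^ (-(2*γ0 - 1 - ε₀)) * |t| ^ (-ε₀)) * (lam * r * |t|)⁻¹ := by
            apply mul_le_mul hsplit2 hkinv (inv_nonneg.2 hk0.le) (by positivity)
        _ = lam⁻¹ * ((r ^ (-(2*γ0 - 1 - ε₀)) * r⁻¹) * (|t| ^ (-ε₀) * |t|⁻¹)) := by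
            rw [mul_inv, mul_inv]; ring
        _ = lam⁻¹ * (r ^ (-(2*γ0 - 1 - ε₀) + -1) * |t| ^ (-ε₀ + -1)) := by
            rw [← Real.rpow_neg_one r, ← Real.rpow_neg_one |t|,
              ← Real.rpow_add hr0, ← Real.rpow_add ht0]
        _ ≤ lam⁻¹ * (r ^ p * |t| ^ (-1 - ε₀)) := by
            have h1 : r ^ (-(2*γ0 - 1 - ε₀) + -1) ≤ r ^ p := by
              apply Real.rpow_le_rpow_of_exponent_le hr
              rw [hpdef]; linarith
            have h2 : (-ε₀ + -1 : ℝ) = -1 - ε₀ := by ring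
            rw [h2]
            exact mul_le_mul_of_nonneg_left
              (mul_le_mul_of_nonneg_right h1 (Real.rpow_nonneg (abs_nonneg t) _))
              (inv_nonneg.2 hlam0.le)
    calc |t| * gradSup (cutV Vs g lam vhat e1 r t)
        ≤ |t| * ((n : ℝ) * C1 * (c * (r * |t| + t ^ 2)) ^ (-γ1)
            + C0 * M * (c * (r * |t| + t ^ 2)) ^ (-γ0) * k⁻¹) :=
          mul_le_mul_of_nonneg_left grad_le (abs_nonneg t)
      _ = ((n : ℝ) * C1 * c ^ (-γ1)) * (|t| * (r * |t| + t ^ 2) ^ (-γ1))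
          + (C0 * M * c ^ (-γ0)) * ((|t| * (r * |t| + t ^ 2) ^ (-γ0)) * k⁻¹) := by
          rw [Real.mul_rpow hc.le hX0.le, Real.mul_rpow hc.le hX0.le]; ring
      _ ≤ ((n : ℝ) * C1 * c ^ (-γ1)) * (r ^ p * |t| ^ (-1 - ε₀))
          + (C0 * M * c ^ (-γ0)) * (lam⁻¹ * (r ^ p * |t| ^ (-1 - ε₀))) := by
          apply add_le_add
          · exact mul_le_mul_of_nonneg_left hT1
              (mul_nonneg (mul_nonneg (Nat.cast_nonneg n) hC1.le) (Real.rpow_nonneg hc.le _))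
          · exact mul_le_mul_of_nonneg_left hT2
              (mul_nonneg (mul_nonneg hC0.le hM0.le) (Real.rpow_nonneg hc.le _))
      _ = D * r ^ p * |t| ^ (-1 - ε₀) := by rw [hDdef]; ring
  -- conclude
  calc ∫ t in {t : ℝ | 1 ≤ |t|}, |t| * gradSup (cutV Vs g lam vhat e1 r t)
      ≤ ∫ t in {t : ℝ | 1 ≤ |t|}, D * r ^ p * |t| ^ (-1 - ε₀) := by
        apply integral_mono_of_nonneg
        · exact Filter.Eventually.of_forall fun t =>
            mul_nonneg (abs_nonneg t) (hgrad_nonneg _)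
        · exact hint.const_mul _
        · exact (ae_restrict_iff' hs).2 (Filter.Eventually.of_forall key)
    _ = D * r ^ p * I₀ := by rw [hI₀def]; exact integral_const_mul _ _
    _ ≤ (D * I₀ + 1) * r ^ p := by nlinarith [hrp, mul_nonneg hD0 hI₀]
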